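/- arXiv:1807.06743 — 5 statements merged into one kernel-verified Lean document; each statement's English description precedes it below -/
import Mathlib

section
/- Let U be an N×N complex unitary matrix, A = diag(a,1,…,1) with a ≠ 0, I'_N = diag(0,1,…,1), and e₁ the first standard basis column vector. For every λ ∈ ℂ with |λ| < 1: (i) the matrix I_N − λ U† I'_N is invertible and (I_N − λ U† I'_N)^{-1} = Σ_{k=0}^∞ λ^k (U† I'_N)^k, the series converging in operator norm; and (ii) λ is an eigenvalue of UA (i.e. det(λ I_N − UA) = 0) if and only if 1 − (λ/a) Σ_{k=0}^∞ λ^k · e₁ᵀ (U† I'_N)^k U† e₁ = 0. -/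
/-!
Since `U` is unitary and `I'` is an orthogonal projection, `‖λ U† I'‖ ≤ |λ| < 1` in the operator
norm, so the Neumann series gives (i). For (ii), put `B = I − λ U† I'` and `E = I − I' = e₁ e₁ᵀ`.
Using `A = I' + a E` and `U U† = I` one checks `λ I − U A = −U (B − (λ/a) U† E) A`. The middle
factor is a rank-one perturbation of the invertible `B`, so by the matrix determinant lemma its
determinant is `det B · (1 − (λ/a) (B⁻¹ U†)₁₁)`, and `(B⁻¹ U†)₁₁` is the series of (i) read off
at the `(1,1)` entry.
-/

open Matrix

theorem norm_star_mul_le_one {E : Type*} [NormedRing E] [StarRing E] [CStarRing E] {u p : E}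
    (hu : u ∈ unitary E) (hp : IsStarProjection p) : ‖star u * p‖ ≤ 1 := by
  rw [show star u = ((star ⟨u, hu⟩ : unitary E) : E) from rfl, CStarRing.norm_coe_unitary_mul]
  exact hp.norm_le p

theorem smul_one_sub_mul_eq_neg_mul_mul {K R : Type*} [CommRing K] [Ring R] [Algebra K R]
    {U V P A : R} {a c lam : K} (hUV : U * V = 1) (hPA : P * A = P)
    (hA : (1 - P) * A = a • (1 - P)) (hca : c * a = lam) :
    lam • 1 - U * A = -U * (1 - lam • (V * P) - c • (V * (1 - P))) * A := by
  have hBA : (1 - lam • (V * P) - c • (V * (1 - P))) * A = A - lam • V := by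
    rw [sub_mul, sub_mul, one_mul, smul_mul_assoc, smul_mul_assoc, mul_assoc, mul_assoc, hPA, hA,
      mul_smul_comm, smul_smul, hca, sub_sub, ← smul_add, ← mul_add, add_sub_cancel, mul_one]
  rw [mul_assoc, hBA, neg_mul, mul_sub, mul_smul_comm, hUV, neg_sub]

namespace Matrix

variable {n R : Type*} [DecidableEq n]

theorem one_sub_diagonal_ite_eq_single [Ring R] (j : n) :
    1 - diagonal (fun i => if i = j then (0 : R) else 1) = single j j 1 := by
  rw [← diagonal_one, diagonal_sub, ← diagonal_single]
  congr 1; ext i; by_cases hi : i = j <;> simp [hi]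

variable [Fintype n]

theorem isStarProjection_single_one [Semiring R] [StarRing R] (i : n) :
    IsStarProjection (single i i (1 : R)) where
  isIdempotentElem := by simp [IsIdempotentElem]
  isSelfAdjoint := by simp [IsSelfAdjoint, star_eq_conjTranspose]

theorem det_sub_smul_mul_single [CommRing R] {B V : Matrix n n R} (hB : IsUnit B.det) (c : R)
    (j : n) : (B - c • (V * single j j 1)).det = B.det * (1 - c * (B⁻¹ * V) j j) := by
  have h : B - c • (V * single j j 1) =
      B + replicateCol Unit (-c • fun i => V i j) * replicateRow Unit (Pi.single j (1 : R)) := by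
    ext i k
    by_cases hk : k = j
    · subst hk
      simp only [sub_apply, add_apply, smul_apply, mul_single_apply_same]
      simp [mul_apply, sub_eq_add_neg]
    · simp only [sub_apply, add_apply, smul_apply, mul_single_apply_of_ne (hbj := hk)]
      simp [mul_apply, hk]
  rw [h, det_add_replicateCol_mul_replicateRow hB, det_unique (n := Unit)]
  simp [mul_apply, replicateCol, replicateRow, Pi.single_apply, Finset.mul_sum, sub_eq_add_neg,
    mul_left_comm]

section L2OpNorm

open scoped Matrix.Norms.L2Operator

variable {𝕜 : Type*} [RCLike 𝕜]

theorem l2_opNorm_smul_conjTranspose_mul_lt_one {U P : Matrix n n 𝕜} (hU : Uᴴ * U = 1)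
    (hP : IsStarProjection P) {lam : 𝕜} (hlam : ‖lam‖ < 1) : ‖lam • (Uᴴ * P)‖ < 1 :=
  calc ‖lam • (Uᴴ * P)‖ ≤ ‖lam‖ * 1 := by
        rw [norm_smul]
        gcongr
        exact norm_star_mul_le_one (mem_unitaryGroup_iff'.mpr hU) hP
    _ < 1 := by simpa

theorem isUnit_det_one_sub_and_hasSum_pow {x : Matrix n n 𝕜} (hx : ‖x‖ < 1) :
    IsUnit (1 - x).det ∧ HasSum (fun k => x ^ k) (1 - x)⁻¹ :=
  ⟨(isUnit_iff_isUnit_det _).mp (isUnit_one_sub_of_norm_lt_one hx),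
    nonsing_inv_eq_ringInverse (1 - x) ▸ hasSum_geom_series_inverse x hx⟩

end L2OpNorm

end Matrix

/-- For `|λ| < 1`: (i) `I − λ U† I'` is invertible with inverse given by the
(operator-norm convergent, equivalently entrywise convergent) geometric series
`Σ_k λ^k (U† I')^k`; (ii) `λ` is an eigenvalue of `UA` iff
`1 − (λ/a) Σ_k λ^k e₁ᵀ (U† I')^k U† e₁ = 0`. -/
theorem stmt4 (N : ℕ) (hN : 0 < N) (U : Matrix (Fin N) (Fin N) ℂ)
    (hU : Uᴴ * U = 1) (a : ℂ) (ha : a ≠ 0)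
    (A Ip : Matrix (Fin N) (Fin N) ℂ)
    (hA : A = Matrix.diagonal (fun i => if i = ⟨0, hN⟩ then a else 1))
    (hIp : Ip = Matrix.diagonal (fun i => if i = ⟨0, hN⟩ then 0 else 1))
    (lam : ℂ) (hlam : ‖lam‖ < 1) :
    (IsUnit ((1 : Matrix (Fin N) (Fin N) ℂ) - lam • (Uᴴ * Ip)).det ∧
      HasSum (fun k : ℕ => lam ^ k • (Uᴴ * Ip) ^ k)
        (((1 : Matrix (Fin N) (Fin N) ℂ) - lam • (Uᴴ * Ip))⁻¹)) ∧
    ((lam • (1 : Matrix (Fin N) (Fin N) ℂ) - U * A).det = 0 ↔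
      1 - (lam / a) * ∑' k : ℕ, lam ^ k * (((Uᴴ * Ip) ^ k * Uᴴ) ⟨0, hN⟩ ⟨0, hN⟩) = 0) := by
  set z : Fin N := ⟨0, hN⟩
  have hE : 1 - Ip = single z z 1 := hIp ▸ one_sub_diagonal_ite_eq_single z
  have hIpA : Ip * A = Ip := by
    rw [hIp, hA, diagonal_mul_diagonal]
    congr 1; ext i; by_cases hi : i = z <;> simp [hi]
  have hEA : (1 - Ip) * A = a • (1 - Ip) := by
    rw [hE, ← diagonal_single, hA, diagonal_mul_diagonal, ← diagonal_smul]
    congr 1; ext i; by_cases hi : i = z <;> simp [hi]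
  have hdetU : (-U).det ≠ 0 := (isUnit_det_of_left_inverse (B := -Uᴴ) (by simp [hU])).ne_zero
  have hP : IsStarProjection Ip := by
    rw [← sub_sub_cancel 1 Ip, hE]; exact (isStarProjection_single_one z).one_sub
  obtain ⟨hB, hS⟩ := isUnit_det_one_sub_and_hasSum_pow
    (l2_opNorm_smul_conjTranspose_mul_lt_one hU hP hlam)
  simp_rw [smul_pow] at hS
  refine ⟨⟨hB, hS⟩, ?_⟩
  have hX : ((1 - lam • (Uᴴ * Ip))⁻¹ * Uᴴ) z z =
      ∑' k : ℕ, lam ^ k * (((Uᴴ * Ip) ^ k * Uᴴ) z z) := by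
    simpa only [Matrix.smul_mul, Matrix.smul_apply, smul_eq_mul] using
      (Pi.hasSum.1 (Pi.hasSum.1 (hS.mul_right Uᴴ) z) z).tsum_eq.symm
  rw [smul_one_sub_mul_eq_neg_mul_mul (mul_eq_one_comm.mp hU) hIpA hEA (div_mul_cancel₀ lam ha),
    det_mul, det_mul, hE, det_sub_smul_mul_single hB, ← hX, hA, det_diagonal,
    Finset.prod_ite_eq']
  simp [hdetU, hB.ne_zero, ha]
end

section
/- Fix μ ∈ ℂ with μ ≠ 0 and z ∈ ℂ with 0 < |z| < 1. For each integer N ≥ 2 set t_N = 1/(|μ|² N) and define ρ_N(z) = (1/π) · ( (|z|² − t_N)^{N−2} / ( (1 − t_N)^{N−1} |z|^{2N} ) ) · ( (N−1)(|z|^{2N} + t_N) + Σ_{k=0}^{N−2} ( (N−2−k) + k·t_N ) |z|^{2(N−1−k)} ). Then lim_{N→∞} ρ_N(z) = (1/(π (1 − |z|²)²)) · exp( (1/|μ|²)(1 − 1/|z|²) ) · ( 1 + (1 − |z|²)/( |μ|² |z|⁴ ) ). -/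
/-!
Write `r = |z|²` and `c = 1/|μ|²`, so that `t_N = c/N`. The prefactor equals
`(1 - (c/r)/N)^(N-2) / ((1 - c/N)^(N-1) r²)`, which tends to `e^(c - c/r) / r²`.
Summing in reverse order, the bracket is
`(N-1)(r^N + t_N) + (1 - t_N) r ∑ j r^j + t_N (N-2) r ∑ r^j` (sums over `j < N-1`),
and the partial geometric sums give the limit `r²/(1-r)² + c/(1-r)`.
-/

open Filter Finset Real Topology

lemma tendsto_one_add_div_pow_sub (c : ℝ) (k : ℕ) :
    Tendsto (fun N : ℕ => (1 + c / N) ^ (N - k)) atTop (𝓝 (exp c)) := by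
  refine (tendsto_add_atTop_iff_nat k).mp ?_
  simp only [Nat.add_sub_cancel, Nat.cast_add]
  refine tendsto_one_add_pow_exp_of_tendsto ?_
  simpa [mul_div_assoc', mul_comm] using (tendsto_natCast_div_add_atTop (k : ℝ)).const_mul c

lemma tendsto_div_natCast_mul_sub (c a : ℝ) :
    Tendsto (fun N : ℕ => c / N * (N - a)) atTop (𝓝 c) := by
  have h := tendsto_const_nhds (x := c) |>.sub
    ((tendsto_const_div_atTop_nhds_zero_nat c).mul_const a)
  rw [zero_mul, sub_zero] at h
  refine h.congr' ?_
  filter_upwards [eventually_ne_atTop 0] with N hN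
  field_simp

lemma tendsto_sub_div_pow_div_pow (c : ℝ) {r : ℝ} (hr : r ≠ 0) :
    Tendsto (fun N : ℕ => (r - c / N) ^ (N - 2) / ((1 - c / N) ^ (N - 1) * r ^ N)) atTop
      (𝓝 (exp (c * (1 - 1 / r)) / r ^ 2)) := by
  have hlim := (tendsto_one_add_div_pow_sub (-(c / r)) 2).div
    ((tendsto_one_add_div_pow_sub (-c) 1).mul_const (r ^ 2)) (by positivity)
  rw [← div_div, ← exp_sub, show -(c / r) - -c = c * (1 - 1 / r) by ring] at hlim
  refine hlim.congr' ?_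
  filter_upwards [eventually_ge_atTop 2] with N hN
  have hx : r - c / N = r * (1 + -(c / r) / N) := by field_simp; ring
  simp only [Pi.div_apply]
  rw [hx, mul_pow, ← pow_sub_mul_pow r hN, sub_eq_add_neg (1 : ℝ), mul_left_comm,
    mul_div_mul_left _ _ (pow_ne_zero _ hr)]
  ring

lemma sum_range_mul_pow_sub_eq (N : ℕ) (r t : ℝ) :
    ∑ k ∈ range (N - 1), (((N : ℝ) - 2 - k) + k * t) * r ^ (N - 1 - k) =
      (1 - t) * r * ∑ j ∈ range (N - 1), (j : ℝ) * r ^ j +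
        t * ((N : ℝ) - 2) * r * ∑ j ∈ range (N - 1), r ^ j := by
  rw [← sum_range_reflect, mul_sum, mul_sum, ← sum_add_distrib]
  refine sum_congr rfl fun j hj => ?_
  have hjN : j + 2 ≤ N := by have := mem_range.mp hj; omega
  have hcast : ((N - 1 - 1 - j : ℕ) : ℝ) = N - 2 - j := by
    rw [show N - 1 - 1 - j = N - (j + 2) by omega, Nat.cast_sub hjN]; push_cast; ring
  rw [hcast, show N - 1 - (N - 1 - 1 - j) = j + 1 by omega, pow_succ]
  ring

lemma tendsto_sub_one_mul_add_sum_range_mul_pow (c : ℝ) {r : ℝ} (hr0 : 0 ≤ r) (hr1 : r < 1) :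
    Tendsto (fun N : ℕ => ((N : ℝ) - 1) * (r ^ N + c / N) +
        ∑ k ∈ range (N - 1), (((N : ℝ) - 2 - k) + k * (c / N)) * r ^ (N - 1 - k)) atTop
      (𝓝 (r ^ 2 / (1 - r) ^ 2 + c / (1 - r))) := by
  have hS0 : Tendsto (fun N : ℕ => ∑ j ∈ range (N - 1), r ^ j) atTop (𝓝 (1 - r)⁻¹) :=
    (hasSum_geometric_of_lt_one hr0 hr1).tendsto_sum_nat.comp (tendsto_sub_atTop_nat 1)
  have hS1 : Tendsto (fun N : ℕ => ∑ j ∈ range (N - 1), (j : ℝ) * r ^ j) atTop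
      (𝓝 (r / (1 - r) ^ 2)) :=
    (hasSum_coe_mul_geometric_of_norm_lt_one (by rwa [Real.norm_of_nonneg hr0])
      ).tendsto_sum_nat.comp (tendsto_sub_atTop_nat 1)
  have hpow : Tendsto (fun N : ℕ => ((N : ℝ) - 1) * r ^ N) atTop (𝓝 0) := by
    simpa [sub_mul] using (tendsto_self_mul_const_pow_of_lt_one hr0 hr1).sub
      (tendsto_pow_atTop_nhds_zero_of_lt_one hr0 hr1)
  have hone_sub : Tendsto (fun N : ℕ => 1 - c / N) atTop (𝓝 1) := by
    simpa using tendsto_const_nhds (x := (1 : ℝ)).sub (tendsto_const_div_atTop_nhds_zero_nat c)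
  have hlim := ((hpow.add (tendsto_div_natCast_mul_sub c 1)).add
    ((hone_sub.mul_const r).mul hS1)).add (((tendsto_div_natCast_mul_sub c 2).mul_const r).mul hS0)
  convert hlim using 1
  · funext N
    rw [sum_range_mul_pow_sub_eq]
    ring
  · have h1r : 1 - r ≠ 0 := by linarith
    congr 1
    field_simp
    ring

/-- Pointwise limit, as `N → ∞`, of the finite-`N` eigenvalue density
`ρ_N(z)` (with `t_N = 1/(|μ|²N)`) to the limiting density
`(1/(π(1−|z|²)²)) e^{(1/|μ|²)(1−1/|z|²)} (1 + (1−|z|²)/(|μ|²|z|⁴))`. -/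
theorem stmt5 (μ z : ℂ) (hμ : μ ≠ 0)
    (hz0 : 0 < ‖z‖) (hz1 : ‖z‖ < 1) :
    Tendsto (fun N : ℕ =>
      (1 / Real.pi) *
        ((‖z‖ ^ 2 - 1 / (‖μ‖ ^ 2 * N)) ^ (N - 2) /
          ((1 - 1 / (‖μ‖ ^ 2 * N)) ^ (N - 1) * ‖z‖ ^ (2 * N))) *
        (((N : ℝ) - 1) * (‖z‖ ^ (2 * N) + 1 / (‖μ‖ ^ 2 * N)) +
          ∑ k ∈ Finset.range (N - 1),
            (((N : ℝ) - 2 - (k : ℝ)) + (k : ℝ) * (1 / (‖μ‖ ^ 2 * N))) *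
              ‖z‖ ^ (2 * (N - 1 - k))))
      atTop
      (nhds ((1 / (Real.pi * (1 - ‖z‖ ^ 2) ^ 2)) *
        Real.exp ((1 / ‖μ‖ ^ 2) * (1 - 1 / ‖z‖ ^ 2)) *
        (1 + (1 - ‖z‖ ^ 2) / (‖μ‖ ^ 2 * ‖z‖ ^ 4)))) := by
  have hr0 : 0 < ‖z‖ ^ 2 := by positivity
  have hr1 : ‖z‖ ^ 2 < 1 := pow_lt_one₀ hz0.le hz1 two_ne_zero
  have hlim := ((tendsto_sub_div_pow_div_pow (1 / ‖μ‖ ^ 2) hr0.ne').const_mul (1 / π)).mul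
    (tendsto_sub_one_mul_add_sum_range_mul_pow (1 / ‖μ‖ ^ 2) hr0.le hr1)
  convert hlim using 1
  · simp only [div_div, pow_mul]
  · have h1r : 1 - ‖z‖ ^ 2 ≠ 0 := sub_ne_zero.mpr hr1.ne'
    have hμ0 : ‖μ‖ ≠ 0 := norm_ne_zero_iff.mpr hμ
    congr 1
    field_simp
end

section
/- Fix an integer k ≥ 1, points z₁,…,z_k ∈ ℂ with 0 < |z_l| < 1 for all l, and t > 0. Set x₀ = Π_{l=1}^k |z_l|². For each integer N ≥ 2 set t_N = t/N, let g_N(x) = Σ_{m=0}^{N−1} x^m and h_N(x) = Σ_{m=0}^{N−1} m x^m, let q_j^{(N)} be the coefficient of s^j in the polynomial (in s) det[ s·g_N(z_i \bar{z}_j) + h_N(z_i \bar{z}_j) ]_{i,j=1}^k, and define functions on (t_N,∞) by F_{N,0}(x) = x^{−1}(1 − t_N/x)^{N−1} and F_{N,l+1}(x) = d/dx [ x·F_{N,l}(x) ]. Let Q_j be the coefficient of s^j in det[ s/(1 − z_i \bar{z}_j) + z_i \bar{z}_j/(1 − z_i \bar{z}_j)² ]_{i,j=1}^k, and define on (0,∞):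 F_0^{(t)}(x) = x^{−1} e^{−t/x} and F_{l+1}^{(t)}(x) = d/dx [ x·F_l^{(t)}(x) ]. Then lim_{N→∞} π^{−k} (1 − t_N)^{1−N} Σ_{l=0}^k q_l^{(N)} · F_{N,l}(x₀) = π^{−k} e^{t} Σ_{l=0}^k Q_l · F_l^{(t)}(x₀). -/
/-!
Each application of `f ↦ (x f)'` to a function of the form `P(1/x) φ(x)` with `P` a polynomial
produces another one of this form. Hence `F_l^{(t)}(x) = P_l(1/x) e^{-t/x}` and
`F_{N,l}(x) = P_{N,l}(1/x) (1 - t_N/x)^{N-1-l}`, where `P_l` and `P_{N,l}` satisfy one recursion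
whose parameters `(t_N, (N-1-j) t_N)` tend to `(0, t)`; so the coefficients of `P_{N,l}` tend to
those of `P_l`, while `(1 - t_N/x)^{N-1-l} → e^{-t/x}`. On the determinant side
`g_N(w) → 1/(1-w)` and `h_N(w) → w/(1-w)²` for `|w| < 1`, and the coefficients of
`det (s A + B)` are polynomial, hence continuous, in the entries of `A` and `B`.
-/

open Matrix Polynomial ComplexConjugate Filter

/-- The operator `f ↦ d/dx (x·f(x))`, iterated. -/
noncomputable def iterD (f : ℝ → ℝ) : ℕ → ℝ → ℝ
  | 0 => f
  | (l + 1) => deriv (fun x => x * iterD f l x)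

/-- The coefficient of `s^j` in the polynomial (in `s`)
`det [ s·g(z_i z̄_{i'}) + h(z_i z̄_{i'}) ]_{i,i'=1}^k`. -/
noncomputable def coefDet {k : ℕ} (g h : ℂ → ℂ) (z : Fin k → ℂ) (j : ℕ) : ℂ :=
  (Matrix.det (Matrix.of fun i i' : Fin k =>
    Polynomial.C (g (z i * conj (z i'))) * Polynomial.X
      + Polynomial.C (h (z i * conj (z i'))))).coeff j

open scoped Topology

noncomputable def iterDPolyStep (c a : ℝ) (p : ℝ[X]) : ℝ[X] :=
  (p - X * derivative p) * (1 - C c * X) + C a * X * p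

noncomputable def iterDPoly (c : ℝ) (a : ℕ → ℝ) : ℕ → ℝ[X]
  | 0 => X
  | l + 1 => iterDPolyStep c (a l) (iterDPoly c a l)

lemma eval_iterDPolyStep (c a : ℝ) (p : ℝ[X]) (u : ℝ) :
    (iterDPolyStep c a p).eval u
      = (p.eval u - u * (derivative p).eval u) * (1 - c * u) + a * u * p.eval u := by
  simp [iterDPolyStep]

lemma iterDPolyStep_eq_expand (c a : ℝ) (p : ℝ[X]) :
    iterDPolyStep c a p = p - X * derivative p - C c * (X * p) + C c * (X * (X * derivative p))
      + C a * (X * p) := by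
  rw [iterDPolyStep]; ring

lemma coeff_iterDPolyStep_zero (c a : ℝ) (p : ℝ[X]) :
    (iterDPolyStep c a p).coeff 0 = p.coeff 0 := by
  simp [iterDPolyStep_eq_expand]

lemma coeff_iterDPolyStep_succ (c a : ℝ) (p : ℝ[X]) (j : ℕ) :
    (iterDPolyStep c a p).coeff (j + 1)
      = -j * p.coeff (j + 1) + (a - c * (1 - j)) * p.coeff j := by
  rcases j with _ | j <;>
  · simp only [iterDPolyStep_eq_expand, coeff_add, coeff_sub, coeff_C_mul, coeff_X_mul,
      coeff_derivative, coeff_X_mul_zero]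
    push_cast
    ring

lemma natDegree_iterDPolyStep_le {c a : ℝ} {p : ℝ[X]} {d : ℕ} (hp : p.natDegree ≤ d) :
    (iterDPolyStep c a p).natDegree ≤ d + 1 := by
  refine natDegree_le_iff_coeff_eq_zero.2 fun m hm => ?_
  obtain ⟨j, rfl⟩ : ∃ j, m = j + 1 := Nat.exists_eq_succ_of_ne_zero (by omega)
  rw [coeff_iterDPolyStep_succ, coeff_eq_zero_of_natDegree_lt (by omega : p.natDegree < j),
    coeff_eq_zero_of_natDegree_lt (by omega : p.natDegree < j + 1)]
  ring

lemma natDegree_iterDPoly_le (c : ℝ) (a : ℕ → ℝ) (l : ℕ) : (iterDPoly c a l).natDegree ≤ l + 1 := by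
  induction l with
  | zero => simp [iterDPoly]
  | succ l ih => exact natDegree_iterDPolyStep_le ih

lemma tendsto_coeff_iterDPoly {α : Type*} {F : Filter α} {c : α → ℝ} {a : α → ℕ → ℝ}
    {c₀ : ℝ} {a₀ : ℕ → ℝ} (hc : Tendsto c F (𝓝 c₀)) (ha : ∀ j, Tendsto (a · j) F (𝓝 (a₀ j)))
    (l j : ℕ) :
    Tendsto (fun i => (iterDPoly (c i) (a i) l).coeff j) F (𝓝 ((iterDPoly c₀ a₀ l).coeff j)) := by
  induction l generalizing j with
  | zero => exact tendsto_const_nhds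
  | succ l ih =>
    rcases j with _ | j
    · simpa only [iterDPoly, coeff_iterDPolyStep_zero] using ih 0
    · simp only [iterDPoly, coeff_iterDPolyStep_succ]
      exact (tendsto_const_nhds.mul (ih (j + 1))).add
        (((ha l).sub (hc.mul tendsto_const_nhds)).mul (ih j))

lemma tendsto_eval_of_tendsto_coeff {α R : Type*} [CommSemiring R] [TopologicalSpace R]
    [IsTopologicalSemiring R] {F : Filter α} {p : α → R[X]} {q : R[X]} {n : ℕ}
    (hp : ∀ i, (p i).natDegree < n) (hq : q.natDegree < n)
    (h : ∀ j, Tendsto (fun i => (p i).coeff j) F (𝓝 (q.coeff j))) (x : R) :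
    Tendsto (fun i => (p i).eval x) F (𝓝 (q.eval x)) := by
  rw [eval_eq_sum_range' hq x]
  simp only [fun i => eval_eq_sum_range' (hp i) x]
  exact tendsto_finsetSum _ fun j _ => (h j).mul_const _

lemma hasDerivAt_mul_eval_inv_mul (p : ℝ[X]) {φ : ℝ → ℝ} {φ' x : ℝ} (hx : x ≠ 0)
    (hφ : HasDerivAt φ φ' x) :
    HasDerivAt (fun y => y * (p.eval y⁻¹ * φ y))
      ((p.eval x⁻¹ - x⁻¹ * (derivative p).eval x⁻¹) * φ x + x * p.eval x⁻¹ * φ') x := by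
  have hp : HasDerivAt (fun y => p.eval y⁻¹) ((derivative p).eval x⁻¹ * -(x ^ 2)⁻¹) x :=
    (p.hasDerivAt x⁻¹).comp x (hasDerivAt_inv hx)
  refine ((hasDerivAt_id' x).mul (hp.mul hφ)).congr_deriv ?_
  simp only [Pi.mul_apply]
  field_simp
  ring

lemma iterD_eqOn_of_hasDerivAt {f : ℝ → ℝ} {G : ℕ → ℝ → ℝ} {s : Set ℝ} {L : ℕ}
    (hs : IsOpen s) (h0 : Set.EqOn f (G 0) s)
    (hstep : ∀ l < L, ∀ x ∈ s, HasDerivAt (fun y => y * G l y) (G (l + 1) x) x) :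
    ∀ l ≤ L, Set.EqOn (iterD f l) (G l) s := by
  intro l
  induction l with
  | zero => exact fun _ => h0
  | succ l ih =>
    intro hl x hx
    have hnear : (fun y => y * iterD f l y) =ᶠ[𝓝 x] fun y => y * G l y := by
      filter_upwards [hs.mem_nhds hx] with y hy
      rw [ih (by omega) hy]
    exact hnear.deriv_eq.trans (hstep l (by omega) x hx).deriv

lemma iterD_inv_mul_exp (t : ℝ) (l : ℕ) {x : ℝ} (hx : x ≠ 0) :
    iterD (fun x => x⁻¹ * Real.exp (-t / x)) l x
      = (iterDPoly 0 (fun _ => t) l).eval x⁻¹ * Real.exp (-t / x) := by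
  refine iterD_eqOn_of_hasDerivAt (L := l)
    (G := fun j y => (iterDPoly 0 (fun _ => t) j).eval y⁻¹ * Real.exp (-t / y))
    isOpen_compl_singleton (fun y _ => by simp [iterDPoly])
    (fun j _ y hy => ?_) l le_rfl hx
  have hy : y ≠ 0 := hy
  have hexp : HasDerivAt (fun y => Real.exp (-t / y)) (Real.exp (-t / y) * (t * (y ^ 2)⁻¹)) y := by
    simpa [div_eq_mul_inv] using ((hasDerivAt_inv hy).const_mul (-t)).exp
  convert hasDerivAt_mul_eval_inv_mul (iterDPoly 0 (fun _ => t) j) hy hexp using 1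
  simp only [iterDPoly, eval_iterDPolyStep]
  field_simp
  ring

lemma iterD_inv_mul_one_sub_div_pow (c : ℝ) (n l : ℕ) (hl : l ≤ n) {x : ℝ} (hx : x ≠ 0) :
    iterD (fun x => x⁻¹ * (1 - c / x) ^ n) l x
      = (iterDPoly c (fun j => ((n - j : ℕ) : ℝ) * c) l).eval x⁻¹ * (1 - c / x) ^ (n - l) := by
  refine iterD_eqOn_of_hasDerivAt (L := n)
    (G := fun j y => (iterDPoly c (fun j => ((n - j : ℕ) : ℝ) * c) j).eval y⁻¹
      * (1 - c / y) ^ (n - j))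
    isOpen_compl_singleton (fun y _ => by simp [iterDPoly])
    (fun j hj y hy => ?_) l hl hx
  have hy : y ≠ 0 := hy
  have hbase : HasDerivAt (fun y => 1 - c / y) (c * (y ^ 2)⁻¹) y := by
    simpa [div_eq_mul_inv] using ((hasDerivAt_inv hy).const_mul c).const_sub 1
  convert hasDerivAt_mul_eval_inv_mul (iterDPoly c (fun j => ((n - j : ℕ) : ℝ) * c) j) hy
    (hbase.fun_pow (n - j)) using 1
  obtain ⟨m, hm⟩ : ∃ m, n - j = m + 1 := Nat.exists_eq_succ_of_ne_zero (by omega)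
  rw [hm, show n - (j + 1) = m by omega]
  simp only [iterDPoly, eval_iterDPolyStep, hm]
  generalize (iterDPoly c (fun j => ((n - j : ℕ) : ℝ) * c) j).eval y⁻¹ = P
  generalize (derivative (iterDPoly c (fun j => ((n - j : ℕ) : ℝ) * c) j)).eval y⁻¹ = P'
  rw [pow_succ, div_eq_mul_inv c y]
  push_cast
  field_simp

lemma tendsto_one_sub_div_pow_sub (a : ℝ) (j : ℕ) :
    Tendsto (fun N : ℕ => (1 - a / N) ^ (N - j)) atTop (𝓝 (Real.exp (-a))) := by
  have hbase : Tendsto (fun N : ℕ => 1 - a / N) atTop (𝓝 1) := by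
    simpa using tendsto_const_nhds.sub (tendsto_const_div_atTop_nhds_zero_nat a)
  have hpow : Tendsto (fun N : ℕ => (1 - a / N) ^ N) atTop (𝓝 (Real.exp (-a))) := by
    simpa [neg_div, ← sub_eq_add_neg] using Real.tendsto_one_add_div_pow_exp (-a)
  have hquot : Tendsto (fun N : ℕ => (1 - a / N) ^ N / (1 - a / N) ^ j) atTop
      (𝓝 (Real.exp (-a))) := by
    simpa [Pi.div_def] using hpow.div (hbase.pow j) (by simp)
  refine hquot.congr' ?_
  filter_upwards [eventually_ge_atTop j, hbase.eventually_ne one_ne_zero] with N hjN hN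
  rw [pow_sub₀ _ hN hjN, div_eq_mul_inv]

lemma tendsto_natCast_sub_mul_div (t : ℝ) (j : ℕ) :
    Tendsto (fun N : ℕ => ((N - 1 - j : ℕ) : ℝ) * (t / N)) atTop (𝓝 t) := by
  have h : Tendsto (fun N : ℕ => t - (1 + j) * (t / N)) atTop (𝓝 t) := by
    simpa using tendsto_const_nhds.sub
      ((tendsto_const_div_atTop_nhds_zero_nat t).const_mul ((1 : ℝ) + j))
  refine h.congr' ?_
  filter_upwards [eventually_gt_atTop (1 + j)] with N hN
  have hN0 : (N : ℝ) ≠ 0 := by exact_mod_cast (by omega : N ≠ 0)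
  rw [Nat.sub_sub, Nat.cast_sub hN.le]
  field_simp
  push_cast
  ring

lemma tendsto_iterD_inv_mul_one_sub_div_pow (t : ℝ) (l : ℕ) {x : ℝ} (hx : x ≠ 0) :
    Tendsto (fun N : ℕ => iterD (fun x => x⁻¹ * (1 - t / N / x) ^ (N - 1)) l x) atTop
      (𝓝 (iterD (fun x => x⁻¹ * Real.exp (-t / x)) l x)) := by
  rw [iterD_inv_mul_exp t l hx]
  have hpoly := tendsto_eval_of_tendsto_coeff (n := l + 2)
    (fun N : ℕ => (natDegree_iterDPoly_le (t / N) (fun j => ((N - 1 - j : ℕ) : ℝ) * (t / N))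
      l).trans_lt (by omega))
    ((natDegree_iterDPoly_le 0 (fun _ => t) l).trans_lt (by omega))
    (tendsto_coeff_iterDPoly (tendsto_const_div_atTop_nhds_zero_nat t)
      (tendsto_natCast_sub_mul_div t) l) x⁻¹
  have hpow : Tendsto (fun N : ℕ => (1 - t / N / x) ^ (N - 1 - l)) atTop
      (𝓝 (Real.exp (-t / x))) := by
    simpa [Nat.sub_sub, div_right_comm _ (x : ℝ), neg_div] using
      tendsto_one_sub_div_pow_sub (t / x) (1 + l)
  refine (hpoly.mul hpow).congr' ?_
  filter_upwards [eventually_gt_atTop l] with N hN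
  rw [iterD_inv_mul_one_sub_div_pow _ (N - 1) l (by omega) hx, Nat.sub_sub]

lemma continuous_coeff_prod_C_mul_X_add_C {ι β R : Type*} [TopologicalSpace β] [CommRing R]
    [TopologicalSpace R] [IsTopologicalRing R] (s : Finset ι) {a b : β → ι → R}
    (ha : ∀ i, Continuous (a · i)) (hb : ∀ i, Continuous (b · i)) (j : ℕ) :
    Continuous fun p => (∏ i ∈ s, (C (a p i) * X + C (b p i))).coeff j := by
  classical
  induction s using Finset.induction_on generalizing j with
  | empty => simpa only [Finset.prod_empty] using continuous_const
  | insert i s hi ih =>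
    simp only [Finset.prod_insert hi, coeff_mul]
    refine continuous_finsetSum _ fun m _ => Continuous.mul ?_ (ih m.2)
    simp only [coeff_add, coeff_C_mul_X, coeff_C]
    split_ifs <;> fun_prop

lemma continuous_coeff_det_C_mul_X_add_C {n R : Type*} [Fintype n] [DecidableEq n] [CommRing R]
    [TopologicalSpace R] [IsTopologicalRing R] (j : ℕ) :
    Continuous fun M : Matrix n n R × Matrix n n R =>
      (det (of fun i i' => C (M.1 i i') * X + C (M.2 i i'))).coeff j := by
  simp only [det_apply, of_apply, finsetSum_coeff, coeff_smul]
  refine continuous_finsetSum _ fun σ _ => (continuous_coeff_prod_C_mul_X_add_C _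
    (fun i => ?_) (fun i => ?_) j).const_smul _ <;> fun_prop

lemma tendsto_coefDet {α : Type*} {F : Filter α} {k : ℕ} (z : Fin k → ℂ) {g h : α → ℂ → ℂ}
    {g₀ h₀ : ℂ → ℂ}
    (hg : ∀ i i', Tendsto (fun a => g a (z i * conj (z i'))) F (𝓝 (g₀ (z i * conj (z i')))))
    (hh : ∀ i i', Tendsto (fun a => h a (z i * conj (z i'))) F (𝓝 (h₀ (z i * conj (z i')))))
    (j : ℕ) : Tendsto (fun a => coefDet (g a) (h a) z j) F (𝓝 (coefDet g₀ h₀ z j)) := by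
  have hM : Tendsto (fun a => (of fun i i' => g a (z i * conj (z i')),
      of fun i i' => h a (z i * conj (z i')))) F
      (𝓝 (of fun i i' => g₀ (z i * conj (z i')), of fun i i' => h₀ (z i * conj (z i')))) :=
    (tendsto_pi_nhds.2 fun i => tendsto_pi_nhds.2 (hg i)).prodMk_nhds
      (tendsto_pi_nhds.2 fun i => tendsto_pi_nhds.2 (hh i))
  have := ((continuous_coeff_det_C_mul_X_add_C (n := Fin k) (R := ℂ) j).tendsto _).comp hM
  simpa only [Function.comp_def, of_apply, coefDet] using this

lemma tendsto_one_sub_div_zpow_one_sub (t : ℝ) :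
    Tendsto (fun N : ℕ => (1 - t / N) ^ ((1 : ℤ) - N)) atTop (𝓝 (Real.exp t)) := by
  have h := (tendsto_one_sub_div_pow_sub t 1).inv₀ (Real.exp_ne_zero (-t))
  rw [← Real.exp_neg, neg_neg] at h
  refine h.congr' ?_
  filter_upwards [eventually_ge_atTop 1] with N hN
  rw [show (1 : ℤ) - N = -((N - 1 : ℕ) : ℤ) by omega, _root_.zpow_neg, zpow_natCast]

theorem stmt6_general (k : ℕ) (z : Fin k → ℂ)
    (hz : ∀ l, 0 < ‖z l‖ ∧ ‖z l‖ < 1)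
    (t : ℝ) :
    Tendsto (fun N : ℕ =>
      (1 / (Real.pi : ℂ)) ^ k * (((1 - t / (N : ℝ)) ^ ((1 : ℤ) - (N : ℤ)) : ℝ) : ℂ) *
        ∑ l ∈ Finset.range (k + 1),
          coefDet (fun x => ∑ m ∈ Finset.range N, x ^ m)
              (fun x => ∑ m ∈ Finset.range N, (m : ℂ) * x ^ m) z l *
            ((iterD (fun x => x⁻¹ * (1 - (t / (N : ℝ)) / x) ^ (N - 1)) l
                (∏ l', ‖z l'‖ ^ 2) : ℝ) : ℂ))
      atTop
      (nhds ((1 / (Real.pi : ℂ)) ^ k * (Real.exp t : ℂ) *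
        ∑ l ∈ Finset.range (k + 1),
          coefDet (fun x => (1 - x)⁻¹) (fun x => x / (1 - x) ^ 2) z l *
            ((iterD (fun x => x⁻¹ * Real.exp (-t / x)) l
                (∏ l', ‖z l'‖ ^ 2) : ℝ) : ℂ))) := by
  have hx₀ : ∏ l', ‖z l'‖ ^ 2 ≠ 0 := Finset.prod_ne_zero_iff.2 fun i _ => pow_ne_zero 2 (hz i).1.ne'
  have hw : ∀ i i', ‖z i * conj (z i')‖ < 1 := fun i i' => by
    rw [norm_mul, Complex.norm_conj]
    exact mul_lt_one_of_nonneg_of_lt_one_left (norm_nonneg _) (hz i).2 (hz i').2.le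
  have hcoef (l : ℕ) := tendsto_coefDet z (g := fun N x => ∑ m ∈ Finset.range N, x ^ m)
    (h := fun N x => ∑ m ∈ Finset.range N, (m : ℂ) * x ^ m)
    (g₀ := fun x => (1 - x)⁻¹) (h₀ := fun x => x / (1 - x) ^ 2)
    (fun i i' => (hasSum_geometric_of_norm_lt_one (hw i i')).tendsto_sum_nat)
    (fun i i' => (hasSum_coe_mul_geometric_of_norm_lt_one (hw i i')).tendsto_sum_nat) l
  have hofReal := Complex.continuous_ofReal.tendsto
  exact (tendsto_const_nhds.mul ((hofReal _).comp (tendsto_one_sub_div_zpow_one_sub t))).mul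
    (tendsto_finsetSum _ fun l _ => (hcoef l).mul
      ((hofReal _).comp (tendsto_iterD_inv_mul_one_sub_div_pow t l hx₀)))

/-- `N → ∞` limit of the finite-`N` `k`-point correlation
`π^{−k} (1 − t_N)^{1−N} Σ_{l=0}^k q_l^{(N)} F_{N,l}(x₀)` (with `t_N = t/N`)
to `π^{−k} e^t Σ_{l=0}^k Q_l F_l^{(t)}(x₀)`. -/
theorem stmt6 (k : ℕ) (hk : 1 ≤ k) (z : Fin k → ℂ)
    (hz : ∀ l, 0 < ‖z l‖ ∧ ‖z l‖ < 1)
    (t : ℝ) (ht : 0 < t) :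
    Tendsto (fun N : ℕ =>
      (1 / (Real.pi : ℂ)) ^ k * (((1 - t / (N : ℝ)) ^ ((1 : ℤ) - (N : ℤ)) : ℝ) : ℂ) *
        ∑ l ∈ Finset.range (k + 1),
          coefDet (fun x => ∑ m ∈ Finset.range N, x ^ m)
              (fun x => ∑ m ∈ Finset.range N, (m : ℂ) * x ^ m) z l *
            ((iterD (fun x => x⁻¹ * (1 - (t / (N : ℝ)) / x) ^ (N - 1)) l
                (∏ l', ‖z l'‖ ^ 2) : ℝ) : ℂ))
      atTop
      (nhds ((1 / (Real.pi : ℂ)) ^ k * (Real.exp t : ℂ) *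
        ∑ l ∈ Finset.range (k + 1),
          coefDet (fun x => (1 - x)⁻¹) (fun x => x / (1 - x) ^ 2) z l *
            ((iterD (fun x => x⁻¹ * Real.exp (-t / x)) l
                (∏ l', ‖z l'‖ ^ 2) : ℝ) : ℂ))) :=
  stmt6_general k z hz t
end

section
/- Let z, w ∈ ℂ with 0 < |z| < 1, 0 < |w| < 1, and let t > 0. Set x₀ = |z|²|w|². Let Q_j (j = 0,1,2) be the coefficient of s^j in the 2×2 determinant det[ s/(1 − z_i \bar{z}_j) + z_i \bar{z}_j/(1 − z_i \bar{z}_j)² ]_{i,j=1}^2 with z₁ = z, z₂ = w, and define F_0^{(t)}(x) = x^{−1} e^{−t/x}, F_{l+1}^{(t)}(x) = d/dx [ x·F_l^{(t)}(x) ]. Define Y₀ = |zw|² ( 1/((1−|z|²)²(1−|w|²)²) − 1/((1 − z\bar{w})²(1 − \bar{z}w)²) ), Y₁ = |w|²/((1−|z|²)(1−|w|²)²) + |z|²/((1−|z|²)²(1−|w|²)) − (1/|1 − z\bar{w}|²)( w\bar{z}/(1 − w\bar{z}) + z\bar{w}/(1 − z\bar{w}) ), and Y₂ = |z−w|²/((1−|z|²)(1−|w|²)|1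 − z\bar{w}|²). Then π^{−2} e^{t} Σ_{l=0}^2 Q_l · F_l^{(t)}(x₀) = π^{−2} e^{t(1 − 1/x₀)} ( Y₀/x₀ + t(Y₁ − Y₂)/x₀² + t² Y₂/x₀³ ). -/
open Matrix Polynomial ComplexConjugate

/-!
For `k = 2` the determinant is a quadratic polynomial in `s` whose coefficients are rational in
`z, z̄, w, w̄` once every `|u|²` is written as `u ū`; in these variables `Q₀ = Y₀` and `Q₁ = Y₁` are
identities of rational functions, and `Q₂ = Y₂` follows from `|z - w|² = |z|² + |w|² - z w̄ - z̄ w`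
and `|1 - z w̄|² = (1 - z w̄)(1 - z̄ w)`. On the other side `x F₀(x) = e^{-t/x}`, so
`F₁ = t e^{-t/x} / x²` and `x F₁ = t F₀`, whence `F₂ = e^{-t/x} (t² / x³ - t / x²)`; the prefactor
`e^t e^{-t/x₀}` is `e^{t(1 - 1/x₀)}`.
-/

open Filter Topology

lemma det_fin_two_linear {R : Type*} [CommRing R] (A B : Fin 2 → Fin 2 → R) :
    det (of fun i j => C (A i j) * X + C (B i j)) =
      C (of A).det * X ^ 2
        + C (A 0 0 * B 1 1 + B 0 0 * A 1 1 - A 0 1 * B 1 0 - B 0 1 * A 1 0) * X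
        + C (of B).det := by
  simp only [det_fin_two, of_apply, C_mul, C_add, C_sub]
  ring

section coefDet

variable (g h : ℂ → ℂ) (z w : ℂ)

lemma coefDet_fin_two_zero :
    coefDet g h ![z, w] 0 = h (z * conj z) * h (w * conj w) - h (z * conj w) * h (w * conj z) := by
  rw [coefDet, det_fin_two_linear]
  simp only [coeff_add, coeff_C_mul_X_pow, coeff_C_mul_X, coeff_C]
  simp [det_fin_two]

lemma coefDet_fin_two_one :
    coefDet g h ![z, w] 1 =
      g (z * conj z) * h (w * conj w) + h (z * conj z) * g (w * conj w)
        - g (z * conj w) * h (w * conj z) - h (z * conj w) * g (w * conj z) := by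
  rw [coefDet, det_fin_two_linear]
  simp

lemma coefDet_fin_two_two :
    coefDet g h ![z, w] 2 = g (z * conj z) * g (w * conj w) - g (z * conj w) * g (w * conj z) := by
  rw [coefDet, det_fin_two_linear]
  simp only [coeff_add, coeff_C_mul_X_pow, coeff_C_mul_X, coeff_C]
  simp [det_fin_two]

end coefDet

lemma one_sub_ne_zero_of_norm_lt_one {u : ℂ} (hu : ‖u‖ < 1) : 1 - u ≠ 0 :=
  sub_ne_zero.2 fun h => by simp [← h] at hu

lemma norm_mul_conj_lt_one {z w : ℂ} (hz : ‖z‖ < 1) (hw : ‖w‖ < 1) : ‖z * conj w‖ < 1 := by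
  rw [norm_mul, Complex.norm_conj]
  exact mul_lt_one_of_nonneg_of_lt_one_left (norm_nonneg z) hz hw.le

section invOneSub

variable {z w : ℂ}

lemma coefDet_inv_one_sub_zero :
    coefDet (fun x => (1 - x)⁻¹) (fun x => x / (1 - x) ^ 2) ![z, w] 0 =
      ((‖z * w‖ : ℂ)) ^ 2 *
        (1 / ((1 - ((‖z‖ : ℂ)) ^ 2) ^ 2 * (1 - ((‖w‖ : ℂ)) ^ 2) ^ 2)
          - 1 / ((1 - z * conj w) ^ 2 * (1 - conj z * w) ^ 2)) := by
  rw [coefDet_fin_two_zero]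
  simp only [← Complex.mul_conj', map_mul, div_eq_mul_inv, mul_inv, ← inv_pow, one_mul]
  ring

lemma coefDet_inv_one_sub_one :
    coefDet (fun x => (1 - x)⁻¹) (fun x => x / (1 - x) ^ 2) ![z, w] 1 =
      ((‖w‖ : ℂ)) ^ 2 / ((1 - ((‖z‖ : ℂ)) ^ 2) * (1 - ((‖w‖ : ℂ)) ^ 2) ^ 2)
        + ((‖z‖ : ℂ)) ^ 2 / ((1 - ((‖z‖ : ℂ)) ^ 2) ^ 2 * (1 - ((‖w‖ : ℂ)) ^ 2))
        - (1 / ((‖1 - z * conj w‖ : ℂ)) ^ 2) *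
          ((w * conj z) / (1 - w * conj z) + (z * conj w) / (1 - z * conj w)) := by
  rw [coefDet_fin_two_one]
  simp only [← Complex.mul_conj', map_mul, map_sub, map_one, Complex.conj_conj, div_eq_mul_inv,
    mul_inv, ← inv_pow, one_mul]
  ring

lemma coefDet_inv_one_sub_two (hz : ‖z‖ < 1) (hw : ‖w‖ < 1) :
    coefDet (fun x => (1 - x)⁻¹) (fun x => x / (1 - x) ^ 2) ![z, w] 2 =
      ((‖z - w‖ : ℂ)) ^ 2 /
        ((1 - ((‖z‖ : ℂ)) ^ 2) * (1 - ((‖w‖ : ℂ)) ^ 2) * ((‖1 - z * conj w‖ : ℂ)) ^ 2) := by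
  have hzz := one_sub_ne_zero_of_norm_lt_one (norm_mul_conj_lt_one hz hz)
  have hww := one_sub_ne_zero_of_norm_lt_one (norm_mul_conj_lt_one hw hw)
  have hzw := one_sub_ne_zero_of_norm_lt_one (norm_mul_conj_lt_one hz hw)
  have hwz : 1 - conj z * w ≠ 0 := by
    rw [mul_comm]; exact one_sub_ne_zero_of_norm_lt_one (norm_mul_conj_lt_one hw hz)
  rw [coefDet_fin_two_two]
  simp only [← Complex.mul_conj', map_mul, map_sub, map_one, Complex.conj_conj]
  field_simp
  ring

end invOneSub

lemma iterD_succ_eq_of_hasDerivAt {f G : ℝ → ℝ} {l : ℕ} {x G' : ℝ}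
    (hG : (fun y => y * iterD f l y) =ᶠ[𝓝 x] G) (hd : HasDerivAt G G' x) :
    iterD f (l + 1) x = G' :=
  (hd.congr_of_eventuallyEq hG).deriv

section iterD

variable (t : ℝ) {x : ℝ}

lemma hasDerivAt_exp_neg_div (hx : x ≠ 0) :
    HasDerivAt (fun y => Real.exp (-t / y)) (Real.exp (-t / x) * (t / x ^ 2)) x := by
  have h := ((hasDerivAt_inv hx).const_mul (-t)).exp
  simp only [← div_eq_mul_inv] at h
  convert h using 2
  field_simp

lemma iterD_one_inv_mul_exp (hx : x ≠ 0) :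
    iterD (fun y => y⁻¹ * Real.exp (-t / y)) 1 x = Real.exp (-t / x) * (t / x ^ 2) := by
  refine iterD_succ_eq_of_hasDerivAt ?_ (hasDerivAt_exp_neg_div t hx)
  filter_upwards [eventually_ne_nhds hx] with y hy
  simp only [iterD]
  field_simp

lemma iterD_two_inv_mul_exp (hx : x ≠ 0) :
    iterD (fun y => y⁻¹ * Real.exp (-t / y)) 2 x
      = Real.exp (-t / x) * (t ^ 2 / x ^ 3 - t / x ^ 2) := by
  have hd := ((hasDerivAt_inv hx).mul (hasDerivAt_exp_neg_div t hx)).const_mul t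
  refine (iterD_succ_eq_of_hasDerivAt ?_ hd).trans ?_
  · filter_upwards [eventually_ne_nhds hx] with y hy
    rw [iterD_one_inv_mul_exp t hy, Pi.mul_apply]
    field_simp
  · field_simp
    ring

end iterD

theorem stmt8_general (z w : ℂ) (hz0 : 0 < ‖z‖) (hz1 : ‖z‖ < 1)
    (hw0 : 0 < ‖w‖) (hw1 : ‖w‖ < 1)
    (t : ℝ)
    (x₀ : ℝ) (hx₀ : x₀ = ‖z‖ ^ 2 * ‖w‖ ^ 2)
    (Y₀ Y₁ Y₂ : ℂ)
    (hY₀ : Y₀ = ((‖z * w‖ : ℂ)) ^ 2 *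
      (1 / ((1 - ((‖z‖ : ℂ)) ^ 2) ^ 2 * (1 - ((‖w‖ : ℂ)) ^ 2) ^ 2)
        - 1 / ((1 - z * conj w) ^ 2 * (1 - conj z * w) ^ 2)))
    (hY₁ : Y₁ = ((‖w‖ : ℂ)) ^ 2 /
        ((1 - ((‖z‖ : ℂ)) ^ 2) * (1 - ((‖w‖ : ℂ)) ^ 2) ^ 2)
      + ((‖z‖ : ℂ)) ^ 2 /
        ((1 - ((‖z‖ : ℂ)) ^ 2) ^ 2 * (1 - ((‖w‖ : ℂ)) ^ 2))
      - (1 / ((‖1 - z * conj w‖ : ℂ)) ^ 2) *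
        ((w * conj z) / (1 - w * conj z) + (z * conj w) / (1 - z * conj w)))
    (hY₂ : Y₂ = ((‖z - w‖ : ℂ)) ^ 2 /
      ((1 - ((‖z‖ : ℂ)) ^ 2) * (1 - ((‖w‖ : ℂ)) ^ 2) *
        ((‖1 - z * conj w‖ : ℂ)) ^ 2)) :
    (1 / (Real.pi : ℂ)) ^ 2 * (Real.exp t : ℂ) *
        ∑ l ∈ Finset.range 3,
          coefDet (fun x => (1 - x)⁻¹) (fun x => x / (1 - x) ^ 2) ![z, w] l *
            ((iterD (fun x => x⁻¹ * Real.exp (-t / x)) l x₀ : ℝ) : ℂ)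
      = (1 / (Real.pi : ℂ)) ^ 2 * (Real.exp (t * (1 - 1 / x₀)) : ℂ) *
          (Y₀ / (x₀ : ℂ) + (t : ℂ) * (Y₁ - Y₂) / (x₀ : ℂ) ^ 2
            + (t : ℂ) ^ 2 * Y₂ / (x₀ : ℂ) ^ 3) := by
  have hx : x₀ ≠ 0 := by rw [hx₀]; positivity
  have hexp : Real.exp (t * (1 - 1 / x₀)) = Real.exp t * Real.exp (-t / x₀) := by
    rw [← Real.exp_add]
    congr 1
    field_simp
    ring
  rw [Finset.sum_range_succ, Finset.sum_range_succ, Finset.sum_range_one,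
    coefDet_inv_one_sub_zero, coefDet_inv_one_sub_one, coefDet_inv_one_sub_two hz1 hw1,
    ← hY₀, ← hY₁, ← hY₂,
    iterD.eq_1, iterD_one_inv_mul_exp t hx, iterD_two_inv_mul_exp t hx, hexp]
  push_cast
  ring

/-- Explicit evaluation of the limiting two-point correlation
`π^{−2} e^t Σ_{l=0}^2 Q_l F_l^{(t)}(x₀)` in terms of `Y₀, Y₁, Y₂`. -/
theorem stmt8 (z w : ℂ) (hz0 : 0 < ‖z‖) (hz1 : ‖z‖ < 1)
    (hw0 : 0 < ‖w‖) (hw1 : ‖w‖ < 1)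
    (t : ℝ) (ht : 0 < t)
    (x₀ : ℝ) (hx₀ : x₀ = ‖z‖ ^ 2 * ‖w‖ ^ 2)
    (Y₀ Y₁ Y₂ : ℂ)
    (hY₀ : Y₀ = ((‖z * w‖ : ℂ)) ^ 2 *
      (1 / ((1 - ((‖z‖ : ℂ)) ^ 2) ^ 2 * (1 - ((‖w‖ : ℂ)) ^ 2) ^ 2)
        - 1 / ((1 - z * conj w) ^ 2 * (1 - conj z * w) ^ 2)))
    (hY₁ : Y₁ = ((‖w‖ : ℂ)) ^ 2 /
        ((1 - ((‖z‖ : ℂ)) ^ 2) * (1 - ((‖w‖ : ℂ)) ^ 2) ^ 2)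
      + ((‖z‖ : ℂ)) ^ 2 /
        ((1 - ((‖z‖ : ℂ)) ^ 2) ^ 2 * (1 - ((‖w‖ : ℂ)) ^ 2))
      - (1 / ((‖1 - z * conj w‖ : ℂ)) ^ 2) *
        ((w * conj z) / (1 - w * conj z) + (z * conj w) / (1 - z * conj w)))
    (hY₂ : Y₂ = ((‖z - w‖ : ℂ)) ^ 2 /
      ((1 - ((‖z‖ : ℂ)) ^ 2) * (1 - ((‖w‖ : ℂ)) ^ 2) *
        ((‖1 - z * conj w‖ : ℂ)) ^ 2)) :
    (1 / (Real.pi : ℂ)) ^ 2 * (Real.exp t : ℂ) *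
        ∑ l ∈ Finset.range 3,
          coefDet (fun x => (1 - x)⁻¹) (fun x => x / (1 - x) ^ 2) ![z, w] l *
            ((iterD (fun x => x⁻¹ * Real.exp (-t / x)) l x₀ : ℝ) : ℂ)
      = (1 / (Real.pi : ℂ)) ^ 2 * (Real.exp (t * (1 - 1 / x₀)) : ℂ) *
          (Y₀ / (x₀ : ℂ) + (t : ℂ) * (Y₁ - Y₂) / (x₀ : ℂ) ^ 2
            + (t : ℂ) ^ 2 * Y₂ / (x₀ : ℂ) ^ 3) :=
  stmt8_general z w hz0 hz1 hw0 hw1 t x₀ hx₀ Y₀ Y₁ Y₂ hY₀ hY₁ hY₂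
end

section
/- Let 0 < r, let p ≥ 0 be an integer, and let w ∈ ℂ with |w|·r < 1. Then ∫_{|z|<r} [1/(π(1 − w\bar{z})²)] · z^p dA(z) = r^{2(p+1)} w^p, where dA denotes two-dimensional Lebesgue measure on the open disk of radius r. In particular, the integral operator on the disk of radius r with kernel K(w,z) = 1/(π(1 − w\bar{z})²) has the monomials z^p as eigenfunctions with eigenvalues r^{2p+2}. -/
/-! On the disk `|z| < r` we have `|w z̄| ≤ |w| r < 1`, so the kernel expands as the uniformly
convergent series `(1 - w z̄)⁻² = ∑ (n + 1) (w z̄)ⁿ` and may be integrated term by term.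
In polar coordinates the monomials `z̄ⁿ zᵖ` are orthogonal on the disk, and
`∫_{|z|<r} |z|^{2p} dA = π r^{2p+2} / (p + 1)`; only the term `n = p` survives, and its
coefficient `(p + 1) / π` cancels these constants. -/

open ComplexConjugate MeasureTheory Complex Set

theorem hasSum_succ_mul_geometric {𝕜 : Type*} [NormedField 𝕜] [CompleteSpace 𝕜] {x : 𝕜}
    (hx : ‖x‖ < 1) : HasSum (fun n : ℕ => ((n : 𝕜) + 1) * x ^ n) (1 / (1 - x) ^ 2) := by
  have hx1 : 1 - x ≠ 0 := sub_ne_zero.2 (by rintro rfl; simp at hx)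
  convert (hasSum_coe_mul_geometric_of_norm_lt_one hx).add (hasSum_geometric_of_norm_lt_one hx)
    using 1
  · ext n; ring
  · field_simp; ring

theorem hasSum_setIntegral_of_norm_le {α ι E : Type*} [MeasurableSpace α] [Countable ι]
    [NormedAddCommGroup E] [NormedSpace ℝ E] {μ : Measure α} {s : Set α} {F : ι → α → E}
    {M : ι → ℝ} (hs : MeasurableSet s) (hμs : μ s ≠ ⊤) (hF : ∀ i, IntegrableOn (F i) s μ)
    (hFM : ∀ i, ∀ a ∈ s, ‖F i a‖ ≤ M i) (hM : Summable M) :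
    HasSum (fun i => ∫ a in s, F i a ∂μ) (∫ a in s, ∑' i, F i a ∂μ) := by
  refine hasSum_integral_of_summable_integral_norm hF <|
    (hM.mul_right (μ.real s)).of_nonneg_of_le (fun i => integral_nonneg fun _ => norm_nonneg _)
      fun i => ?_
  calc ∫ a in s, ‖F i a‖ ∂μ ≤ ∫ _ in s, M i ∂μ :=
        setIntegral_mono_on (hF i).norm (integrableOn_const hμs) hs (hFM i)
    _ = M i * μ.real s := by rw [setIntegral_const, smul_eq_mul, mul_comm]

theorem setIntegral_ball_zero_eq_polarCoord {E : Type*} [NormedAddCommGroup E]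
    [NormedSpace ℝ E] (f : ℂ → E) (r : ℝ) :
    ∫ z in Metric.ball (0 : ℂ) r, f z
      = ∫ x in Ioo 0 r ×ˢ Ioo (-Real.pi) Real.pi, x.1 • f (Complex.polarCoord.symm x) := by
  rw [← integral_indicator measurableSet_ball, ← Complex.integral_comp_polarCoord_symm,
    ← integral_indicator (measurableSet_Ioo.prod measurableSet_Ioo),
    ← integral_indicator polarCoord.open_target.measurableSet]
  congr 1
  ext x
  by_cases hx : x ∈ polarCoord.target
  · have hball : Complex.polarCoord.symm x ∈ Metric.ball 0 r ↔
        x ∈ Ioo 0 r ×ˢ Ioo (-Real.pi) Real.pi := by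
      rw [polarCoord_target] at hx
      simp [abs_of_pos hx.1.out, hx.1.out, hx.2]
    by_cases hxS : x ∈ Ioo 0 r ×ˢ Ioo (-Real.pi) Real.pi
    · simp only [indicator_of_mem hx, indicator_of_mem hxS, indicator_of_mem (hball.2 hxS)]
    · simp only [indicator_of_mem hx, indicator_of_notMem hxS,
        indicator_of_notMem (mt hball.1 hxS), smul_zero]
  · have hxS : x ∉ Ioo 0 r ×ˢ Ioo (-Real.pi) Real.pi :=
      fun h => hx <| by rw [polarCoord_target]; exact ⟨h.1.1, h.2⟩
    simp only [indicator_of_notMem hx, indicator_of_notMem hxS]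

theorem setIntegral_exp_int_mul_I (k : ℤ) :
    ∫ θ in Ioo (-Real.pi) Real.pi, exp (k * θ * I) = if k = 0 then 2 * (Real.pi : ℂ) else 0 := by
  rw [← integral_Ioc_eq_integral_Ioo,
    ← intervalIntegral.integral_of_le (by linarith [Real.pi_pos])]
  split_ifs with hk
  · simp [hk, two_mul]
  have hkI : (k : ℂ) * I ≠ 0 := by simp [hk]
  have hend : ∀ θ : ℝ, θ = Real.pi ∨ θ = -Real.pi → exp (k * I * θ) = (-1) ^ k := by
    rintro θ (rfl | rfl)
    · rw [show (k : ℂ) * I * Real.pi = k * (Real.pi * I) by ring, exp_int_mul, exp_pi_mul_I]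
    · rw [show (k : ℂ) * I * ↑(-Real.pi) = ↑(-k) * (Real.pi * I) by push_cast; ring, exp_int_mul,
        exp_pi_mul_I, zpow_neg, ← inv_zpow, inv_neg, inv_one]
  simp_rw [mul_right_comm _ _ I]
  rw [integral_exp_mul_complex hkI, hend _ (.inl rfl), hend _ (.inr rfl), sub_self, zero_div]

theorem conj_pow_mul_pow_polarCoord_symm (x : ℝ × ℝ) (m n : ℕ) :
    conj (Complex.polarCoord.symm x) ^ m * Complex.polarCoord.symm x ^ n
      = ((x.1 ^ (m + n) : ℝ) : ℂ) * exp (((n : ℤ) - m : ℤ) * x.2 * I) := by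
  have hconj : conj (Complex.polarCoord.symm x) = x.1 * exp (x.2 * -I) := by
    rw [Complex.polarCoord_symm_apply, ofReal_cos, ofReal_sin, ← exp_mul_I, map_mul, conj_ofReal,
      ← exp_conj, map_mul, conj_ofReal, conj_I]
  rw [hconj, Complex.polarCoord_symm_apply, ofReal_cos, ofReal_sin, ← exp_mul_I, mul_pow,
    mul_pow, ← exp_nat_mul, ← exp_nat_mul,
    show ((x.1 ^ (m + n) : ℝ) : ℂ) = (x.1 : ℂ) ^ m * (x.1 : ℂ) ^ n by push_cast; ring,
    show (((n : ℤ) - m : ℤ) : ℂ) * x.2 * I = m * (x.2 * -I) + n * (x.2 * I) by push_cast; ring,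
    exp_add]
  ring

theorem setIntegral_ball_conj_pow_mul_pow {r : ℝ} (hr : 0 ≤ r) (m n : ℕ) :
    ∫ z in Metric.ball (0 : ℂ) r, conj z ^ m * z ^ n
      = if m = n then ((Real.pi * r ^ (2 * n + 2) / (n + 1) : ℝ) : ℂ) else 0 := by
  have hpolar : ∀ x : ℝ × ℝ,
      x.1 • (conj (Complex.polarCoord.symm x) ^ m * Complex.polarCoord.symm x ^ n)
        = ((x.1 ^ (m + n + 1) : ℝ) : ℂ) * exp (((n : ℤ) - m : ℤ) * x.2 * I) := fun x => by
    rw [conj_pow_mul_pow_polarCoord_symm, real_smul, ← mul_assoc, ← ofReal_mul, pow_succ']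
  have hradial : ∫ ρ in Ioo 0 r, ((ρ ^ (m + n + 1) : ℝ) : ℂ)
      = ((r ^ (m + n + 2) / (m + n + 2) : ℝ) : ℂ) := by
    rw [integral_complex_ofReal, ← integral_Ioc_eq_integral_Ioo,
      ← intervalIntegral.integral_of_le hr, integral_pow]
    push_cast
    ring
  simp_rw [setIntegral_ball_zero_eq_polarCoord, hpolar]
  rw [Measure.volume_eq_prod, setIntegral_prod_mul (fun ρ : ℝ => ((ρ ^ (m + n + 1) : ℝ) : ℂ))
    (fun θ : ℝ => exp (((n : ℤ) - m : ℤ) * θ * I)), hradial, setIntegral_exp_int_mul_I]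
  rcases eq_or_ne m n with rfl | hmn
  · rw [sub_self, if_pos rfl, if_pos rfl]
    have hm : (m : ℂ) + 1 ≠ 0 := Nat.cast_add_one_ne_zero m
    push_cast
    rw [show (m : ℂ) + m + 2 = 2 * (m + 1) by ring]
    field_simp
    ring
  · rw [if_neg (by omega), if_neg hmn, mul_zero]

noncomputable def kernelSeriesTerm (w : ℂ) (p n : ℕ) (z : ℂ) : ℂ :=
  ((n : ℂ) + 1) / Real.pi * w ^ n * (conj z ^ n * z ^ p)

theorem hasSum_kernelSeriesTerm {w z : ℂ} (hwz : ‖w‖ * ‖z‖ < 1) (p : ℕ) :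
    HasSum (fun n => kernelSeriesTerm w p n z)
      (1 / ((Real.pi : ℂ) * (1 - w * conj z) ^ 2) * z ^ p) := by
  have hterm : (fun n => kernelSeriesTerm w p n z)
      = fun n : ℕ => ((n : ℂ) + 1) * (w * conj z) ^ n * (z ^ p / Real.pi) := by
    ext n
    simp only [kernelSeriesTerm]
    ring
  rw [hterm, show 1 / ((Real.pi : ℂ) * (1 - w * conj z) ^ 2) * z ^ p
      = 1 / (1 - w * conj z) ^ 2 * (z ^ p / Real.pi) by rw [one_div, one_div, mul_inv]; ring]
  have hx : ‖w * conj z‖ < 1 := by rwa [norm_mul, RCLike.norm_conj]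
  exact (hasSum_succ_mul_geometric hx).mul_right _

theorem norm_kernelSeriesTerm_le {w z : ℂ} {r : ℝ} (hz : ‖z‖ ≤ r) (p n : ℕ) :
    ‖kernelSeriesTerm w p n z‖ ≤ ((n : ℝ) + 1) * (‖w‖ * r) ^ n * (r ^ p / Real.pi) := by
  have hn : ‖(n : ℂ) + 1‖ = n + 1 := by exact_mod_cast norm_natCast (n + 1)
  have hr : 0 ≤ r := (norm_nonneg z).trans hz
  calc ‖kernelSeriesTerm w p n z‖
      = ((n : ℝ) + 1) / Real.pi * ‖w‖ ^ n * (‖z‖ ^ n * ‖z‖ ^ p) := by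
        simp only [kernelSeriesTerm, norm_mul, norm_div, norm_pow, RCLike.norm_conj, hn,
          norm_real, Real.norm_of_nonneg Real.pi_pos.le]
    _ ≤ ((n : ℝ) + 1) / Real.pi * ‖w‖ ^ n * (r ^ n * r ^ p) := by gcongr
    _ = ((n : ℝ) + 1) * (‖w‖ * r) ^ n * (r ^ p / Real.pi) := by ring

theorem continuous_kernelSeriesTerm (w : ℂ) (p n : ℕ) : Continuous (kernelSeriesTerm w p n) := by
  unfold kernelSeriesTerm
  fun_prop

theorem setIntegral_ball_kernelSeriesTerm {r : ℝ} (hr : 0 ≤ r) (w : ℂ) (p n : ℕ) :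
    ∫ z in Metric.ball (0 : ℂ) r, kernelSeriesTerm w p n z
      = if n = p then ((r ^ (2 * (p + 1)) : ℝ) : ℂ) * w ^ p else 0 := by
  simp only [kernelSeriesTerm]
  rw [integral_const_mul, setIntegral_ball_conj_pow_mul_pow hr]
  rcases eq_or_ne n p with rfl | hnp
  · have hn : (n : ℂ) + 1 ≠ 0 := Nat.cast_add_one_ne_zero n
    have hpi : (Real.pi : ℂ) ≠ 0 := ofReal_ne_zero.2 Real.pi_ne_zero
    rw [if_pos rfl, if_pos rfl]
    push_cast
    field_simp
    ring
  · rw [if_neg hnp, if_neg hnp, mul_zero]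

/-- The monomials `z^p` are eigenfunctions, with eigenvalues `r^{2p+2}`, of the
integral operator on the disk of radius `r` with kernel `K(w,z) = 1/(π(1 − w z̄)²)`. -/
theorem stmt10 (r : ℝ) (hr : 0 < r) (p : ℕ) (w : ℂ) (hw : ‖w‖ * r < 1) :
    ∫ z in Metric.ball (0 : ℂ) r,
        (1 / ((Real.pi : ℂ) * (1 - w * conj z) ^ 2)) * z ^ p
      = ((r ^ (2 * (p + 1)) : ℝ) : ℂ) * w ^ p := by
  have hz : ∀ z ∈ Metric.ball (0 : ℂ) r, ‖z‖ ≤ r := fun z hz => (mem_ball_zero_iff.1 hz).le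
  have hexpand : ∀ z ∈ Metric.ball (0 : ℂ) r, 1 / ((Real.pi : ℂ) * (1 - w * conj z) ^ 2) * z ^ p
      = ∑' n, kernelSeriesTerm w p n z := fun z hz' =>
    (hasSum_kernelSeriesTerm
      ((mul_le_mul_of_nonneg_left (hz z hz') (norm_nonneg w)).trans_lt hw) p).tsum_eq.symm
  have hsummable : Summable fun n : ℕ => ((n : ℝ) + 1) * (‖w‖ * r) ^ n * (r ^ p / Real.pi) := by
    have hwr : ‖‖w‖ * r‖ < 1 := by rwa [Real.norm_of_nonneg (by positivity)]
    exact (hasSum_succ_mul_geometric hwr).summable.mul_right _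
  have hint : ∀ n, IntegrableOn (kernelSeriesTerm w p n) (Metric.ball 0 r) := fun n =>
    ((continuous_kernelSeriesTerm w p n).continuousOn.integrableOn_compact
      (isCompact_closedBall 0 r)).mono_set Metric.ball_subset_closedBall
  rw [setIntegral_congr_fun measurableSet_ball hexpand,
    ← (hasSum_setIntegral_of_norm_le measurableSet_ball measure_ball_lt_top.ne hint
      (fun n z hz' => norm_kernelSeriesTerm_le (hz z hz') p n) hsummable).tsum_eq]
  simp_rw [setIntegral_ball_kernelSeriesTerm hr.le]
  exact tsum_ite_eq p _
end
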